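/- In the same setting, if α ∈ O (with no β ∈ O₃ satisfying α = β̃ or α = θ(β̃)) is not a stationary root, then there exists an integer j > 1 such that α = α^j = θ(α^{(j)}); that is, every non-stationary such root is cyclic. Conversely, if there exists j > 1 with α = α^j and α ≠ α^{j−1}, then α = θ(α^{(j)}) and α is not stationary. -/

import Mathlib

/-- The combinatorial setting of Section 4: disjoint Heisenberg sets `Γ_γ` (`γ ∈ S`)
inside `Δ(π')` satisfying conditions (C) and (C'), abstracted as follows.  `O` is the
union of the punctured Heisenberg sets, `θ` the pairing involution, `Sα α` the set
`S_α = {β ∈ O | α + β ∈ S and [x_α, x_β]~ ≠ 0}`, and `tilde` the map `α ↦ α̃` of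
condition (C').  `O_n = {α ∈ O | |S_α| = n}`. -/
structure ChainSetup (M : Type*) [AddCommGroup M] where
  S : Set M
  O : Set M
  Ofin : O.Finite
  θ : M → M
  tilde : M → M
  Sα : M → Set M
  θ_mem : ∀ α ∈ O, θ α ∈ O
  θ_invol : ∀ α ∈ O, θ (θ α) = α
  θ_ne : ∀ α ∈ O, θ α ≠ α
  sum_mem_S : ∀ α ∈ O, α + θ α ∈ S
  Sα_sub : ∀ α ∈ O, Sα α ⊆ O
  Sα_sum : ∀ α ∈ O, ∀ β ∈ Sα α, α + β ∈ S
  Sα_symm : ∀ α ∈ O, ∀ β ∈ Sα α, α ∈ Sα β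
  θ_in_Sα : ∀ α ∈ O, θ α ∈ Sα α
  /-- Condition (C'): every `α ∈ O` lies in `O₁ ⊔ O₂ ⊔ O₃`. -/
  card₁₂₃ : ∀ α ∈ O, 1 ≤ (Sα α).ncard ∧ (Sα α).ncard ≤ 3
  /-- Condition (C'): for `α ∈ O₃` there is `α̃ ∈ S_α ∩ O₂ \ {θ α}` with `θ(α̃) ∈ O₁`. -/
  tilde_spec : ∀ α ∈ O, (Sα α).ncard = 3 →
    tilde α ∈ Sα α ∧ tilde α ≠ θ α ∧ (Sα (tilde α)).ncard = 2 ∧ (Sα (θ (tilde α))).ncard = 1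
  /-- Notation 4.2: for `α ∈ O₂` one sets `α̃ = θ α`. -/
  tilde_eq : ∀ α ∈ O, (Sα α).ncard = 2 → tilde α = θ α

namespace ChainSetup

variable {M : Type*} [AddCommGroup M] (c : ChainSetup M)

/-- `a` is a sequence `(α^i)_{i ∈ ℕ}` constructed from the root `α` as in
Definition 4.4 (equivalently, `(α^{(i)})` is such a sequence constructed from `θ α`,
Definition 4.3): `a 0 = α`; if `θ(a n) ∈ O₁` then `a (n+1) = a n`; otherwise
`a (n+1) ∈ S_{θ(a n)} \ {a n, (θ(a n))~}`. -/
def IsSeq (α : M) (a : ℕ → M) : Prop :=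
  a 0 = α ∧ (∀ n, a n ∈ c.O) ∧ ∀ n,
    ((c.Sα (c.θ (a n))).ncard = 1 → a (n + 1) = a n) ∧
    (2 ≤ (c.Sα (c.θ (a n))).ncard →
      a (n + 1) ∈ c.Sα (c.θ (a n)) \ {a n, c.tilde (c.θ (a n))})

/-- A sequence is stationary if it is eventually constant from some rank on. -/
def Stationary (_c : ChainSetup M) (a : ℕ → M) : Prop := ∃ n, a (n + 1) = a n

/-- `α` is not of the form `β̃` or `θ(β̃)` for `β ∈ O₃`. -/
def NotTildeImage (α : M) : Prop :=
  ∀ β ∈ c.O, (c.Sα β).ncard = 3 → α ≠ c.tilde β ∧ α ≠ c.θ (c.tilde β)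

/-
The successor rule is deterministic: `S_z \ {θ z, z̃}` has at most one element. A move
`x → z` (with `z ≠ x`) can be reversed, `θ z → θ x` being again a move, unless
`|S_z| = 3` and `x = θ(z̃)`. Along a sequence that never stalls this exception cannot
occur: the first term is excluded by hypothesis, and every later term lies outside `O₁`
while `θ(z̃) ∈ O₁`. Hence each term determines its predecessor, so the sequence, living in
the finite set `O`, returns to `α`, and the sequence started at `θ α` runs through the cycle
backwards. Conversely, a return to `α` makes the sequence periodic, and a periodic sequence
that stalls is constant.
-/

lemma finite_Sα {z : M} (hz : z ∈ c.O) : (c.Sα z).Finite :=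
  c.Ofin.subset (c.Sα_sub z hz)

lemma θ_injOn : Set.InjOn c.θ c.O := fun x hx y hy h => by
  rw [← c.θ_invol x hx, h, c.θ_invol y hy]

lemma subsingleton_Sα_diff {z : M} (hz : z ∈ c.O) :
    (c.Sα z \ {c.θ z, c.tilde z}).Subsingleton := by
  have hfin := c.finite_Sα hz
  refine (Set.ncard_le_one (hfin.subset Set.sdiff_subset)).1 ?_
  rw [Set.insert_eq, ← Set.sdiff_sdiff]
  have hθ := Set.ncard_sdiff_singleton_of_mem (c.θ_in_Sα z hz)
  by_cases h3 : (c.Sα z).ncard = 3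
  · obtain ⟨ht, htθ, -, -⟩ := c.tilde_spec z hz h3
    have ht' : c.tilde z ∈ c.Sα z \ {c.θ z} := ⟨ht, htθ⟩
    rw [Set.ncard_sdiff_singleton_of_mem ht', hθ, h3]
  · have := (c.card₁₂₃ z hz).2
    calc _ ≤ (c.Sα z \ {c.θ z}).ncard :=
          Set.ncard_le_ncard Set.sdiff_subset (hfin.subset Set.sdiff_subset)
      _ ≤ 1 := by omega

lemma notTildeImage_θ {α : M} (hα : α ∈ c.O) (h : c.NotTildeImage α) :
    c.NotTildeImage (c.θ α) := fun β hβ h3 => by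
  have ht : c.tilde β ∈ c.O := c.Sα_sub β hβ (c.tilde_spec β hβ h3).1
  obtain ⟨h₁, h₂⟩ := h β hβ h3
  exact ⟨fun he => h₂ (by rw [← he, c.θ_invol α hα]), fun he => h₁ (c.θ_injOn hα ht he)⟩

def Step (x w : M) : Prop :=
  ((c.Sα (c.θ x)).ncard = 1 → w = x) ∧
    (2 ≤ (c.Sα (c.θ x)).ncard → w ∈ c.Sα (c.θ x) \ {x, c.tilde (c.θ x)})

variable {c}

namespace Step

variable {x z : M}

lemma unique {w₁ w₂ : M} (hx : x ∈ c.O) (h₁ : c.Step x w₁) (h₂ : c.Step x w₂) : w₁ = w₂ := by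
  have hθx := c.θ_mem x hx
  rcases (c.card₁₂₃ _ hθx).1.eq_or_lt with h | h
  · rw [h₁.1 h.symm, h₂.1 h.symm]
  · have hres := c.subsingleton_Sα_diff hθx
    rw [c.θ_invol x hx] at hres
    exact hres (h₁.2 h) (h₂.2 h)

lemma mem_of_ne (h : c.Step x z) (hx : x ∈ c.O) (hne : z ≠ x) :
    z ∈ c.Sα (c.θ x) \ {x, c.tilde (c.θ x)} :=
  h.2 (lt_of_le_of_ne (c.card₁₂₃ _ (c.θ_mem x hx)).1 fun h1 => hne (h.1 h1.symm))

lemma θ_mem_Sα (h : c.Step x z) (hx : x ∈ c.O) (hne : z ≠ x) : c.θ x ∈ c.Sα z :=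
  c.Sα_symm _ (c.θ_mem x hx) z (h.mem_of_ne hx hne).1

lemma two_le_ncard (h : c.Step x z) (hx : x ∈ c.O) (hz : z ∈ c.O) (hne : z ≠ x) :
    2 ≤ (c.Sα z).ncard :=
  (Set.one_lt_ncard (c.finite_Sα hz)).2
    ⟨_, h.θ_mem_Sα hx hne, _, c.θ_in_Sα z hz, fun he => hne (c.θ_injOn hx hz he).symm⟩

lemma reverse (h : c.Step x z) (hx : x ∈ c.O) (hz : z ∈ c.O) (hne : z ≠ x)
    (hx₃ : (c.Sα z).ncard = 3 → x ≠ c.θ (c.tilde z)) : c.Step (c.θ z) (c.θ x) := by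
  have h2 := h.two_le_ncard hx hz hne
  unfold Step
  rw [c.θ_invol z hz]
  refine ⟨fun h1 => by omega, fun _ => ⟨h.θ_mem_Sα hx hne, ?_⟩⟩
  simp only [Set.mem_insert_iff, Set.mem_singleton_iff, not_or]
  have hθne : c.θ x ≠ c.θ z := fun he => hne (c.θ_injOn hx hz he).symm
  refine ⟨hθne, ?_⟩
  rcases h2.eq_or_lt with h2 | h3
  · rwa [c.tilde_eq z hz h2.symm]
  · exact fun he => hx₃ (by have := (c.card₁₂₃ z hz).2; omega) (by rw [← he, c.θ_invol x hx])

end Step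

lemma succ_ne_of_not_stationary {a : ℕ → M} (hm : ¬ c.Stationary a) (n : ℕ) :
    a (n + 1) ≠ a n :=
  fun h => hm ⟨n, h⟩

namespace IsSeq

variable {α : M} {a a' : ℕ → M} (ha : c.IsSeq α a)
include ha

lemma mem (n : ℕ) : a n ∈ c.O := ha.2.1 n

lemma step (n : ℕ) : c.Step (a n) (a (n + 1)) := ha.2.2 n

lemma add_eq_add_of_eq {m n : ℕ} (h : a m = a n) (k : ℕ) : a (m + k) = a (n + k) := by
  induction k with
  | zero => exact h
  | succ k ih => exact ((ha.step (n + k)).unique (ha.mem _) (ih ▸ ha.step (m + k))).symm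

lemma periodic {j : ℕ} (hj : a j = α) : Function.Periodic a j := fun n => by
  simpa [add_comm] using ha.add_eq_add_of_eq (hj.trans ha.1.symm) n

lemma eq_zero_of_stationary_of_periodic (hs : c.Stationary a) {j : ℕ} (hp : Function.Periodic a j)
    (hj : 0 < j) (m : ℕ) : a m = a 0 := by
  obtain ⟨n, hn⟩ := hs
  have hconst : Function.Periodic (fun k => a (n + k)) 1 := fun k => by
    simpa [add_right_comm, ← add_assoc] using ha.add_eq_add_of_eq hn k
  have eq_n : ∀ m, a m = a n := fun m => by
    obtain ⟨k, hk⟩ : ∃ k, m + n * j = n + k :=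
      ⟨m + n * j - n, by have := Nat.le_mul_of_pos_right n hj; omega⟩
    rw [← hp.nat_mul n m, Nat.cast_id, hk]
    simpa using hconst.nat_mul_eq k
  rw [eq_n m, eq_n 0]

section NotStationary

variable (hnt : c.NotTildeImage α) (hm : ¬ c.Stationary a)
include hnt hm

lemma ne_θ_tilde {z : M} (hz : z ∈ c.O) (h3 : (c.Sα z).ncard = 3) :
    ∀ n, a n ≠ c.θ (c.tilde z)
  | 0 => ha.1 ▸ (hnt z hz h3).2
  | n + 1 => fun he => by
    have := (ha.step n).two_le_ncard (ha.mem n) (ha.mem _) (succ_ne_of_not_stationary hm n)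
    rw [he, (c.tilde_spec z hz h3).2.2.2] at this
    omega

lemma step_θ (n : ℕ) : c.Step (c.θ (a (n + 1))) (c.θ (a n)) :=
  (ha.step n).reverse (ha.mem n) (ha.mem _) (succ_ne_of_not_stationary hm n)
    fun h3 => ha.ne_θ_tilde hnt hm (ha.mem _) h3 n

lemma eq_of_add_eq {m n : ℕ} (k : ℕ) (h : a (m + k) = a (n + k)) : a m = a n := by
  induction k with
  | zero => exact h
  | succ k ih =>
    refine ih (c.θ_injOn (ha.mem _) (ha.mem _) ?_)
    exact (ha.step_θ hnt hm (m + k)).unique (c.θ_mem _ (ha.mem _)) (h ▸ ha.step_θ hnt hm (n + k))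

lemma exists_return : ∃ j, 1 < j ∧ a j = α := by
  obtain ⟨m, n, hmn, he⟩ := c.Ofin.exists_lt_map_eq_of_forall_mem ha.mem
  obtain ⟨d, rfl⟩ := Nat.exists_eq_add_of_lt hmn
  have hd : a 0 = a (d + 1) := ha.eq_of_add_eq hnt hm m (by rw [zero_add, he]; ring_nf)
  refine ⟨d + 1, ?_, hd.symm.trans ha.1⟩
  rcases d with _ | d
  · exact absurd hd.symm (succ_ne_of_not_stationary hm 0)
  · omega

lemma reverse (ha' : c.IsSeq (c.θ α) a') {j : ℕ} (hj : a j = α) :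
    ∀ i ≤ j, a' i = c.θ (a (j - i)) := by
  intro i
  induction i with
  | zero => intro; rw [ha'.1, Nat.sub_zero, hj]
  | succ i ih =>
    intro hi
    have hstep := ha.step_θ hnt hm (j - (i + 1))
    rw [show j - (i + 1) + 1 = j - i by omega, ← ih (by omega)] at hstep
    exact (ha'.step i).unique (ha'.mem i) hstep

end NotStationary

end IsSeq

end ChainSetup

theorem nonstationary_iff_cyclic {M : Type*} [AddCommGroup M] (c : ChainSetup M)
    (α : M) (hα : α ∈ c.O) (hnt : c.NotTildeImage α)
    (a a' : ℕ → M) (ha : c.IsSeq α a) (ha' : c.IsSeq (c.θ α) a') :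
    (¬ (c.Stationary a ∧ c.Stationary a') →
        ∃ j : ℕ, 1 < j ∧ a j = α ∧ c.θ (a' j) = α) ∧
    (∀ j : ℕ, 1 < j → a j = α → a (j - 1) ≠ α →
        c.θ (a' j) = α ∧ ¬ (c.Stationary a ∧ c.Stationary a')) := by
  have hθθ := c.θ_invol α hα
  have hnt' := c.notTildeImage_θ hα hnt
  have ha'' : c.IsSeq (c.θ (c.θ α)) a := hθθ.symm ▸ ha
  have θ_a'_eq : ∀ j, a j = α → ¬ c.Stationary a → c.θ (a' j) = α := fun j haj hs => by
    rw [ha.reverse hnt hs ha' haj j le_rfl, Nat.sub_self, ha.1, hθθ]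
  refine ⟨fun hns => ?_, fun j hj haj hprev => ?_⟩
  · by_cases hs : c.Stationary a
    · have hs' : ¬ c.Stationary a' := fun hs' => hns ⟨hs, hs'⟩
      obtain ⟨j, hj, ha'j⟩ := ha'.exists_return hnt' hs'
      have haj : a j = α := by
        rw [ha'.reverse hnt' hs' ha'' ha'j j le_rfl, Nat.sub_self, ha'.1, hθθ]
      exact ⟨j, hj, haj, by rw [ha'j, hθθ]⟩
    · obtain ⟨j, hj, haj⟩ := ha.exists_return hnt hs
      exact ⟨j, hj, haj, θ_a'_eq j haj hs⟩
  · have hs : ¬ c.Stationary a := fun hs =>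
      hprev ((ha.eq_zero_of_stationary_of_periodic hs (ha.periodic haj) (by omega) _).trans ha.1)
    exact ⟨θ_a'_eq j haj hs, fun h => hs h.1⟩
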